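/- Let B = K + ℂ·S^n ⊂ B(ℓ²(ℤ≥0)) for n ≥ 0, where S is the backward unilateral shift and K the compacts. Then B is a closed subspace of B(ℓ²(ℤ≥0)), closed under left multiplication by K^+ = K + ℂ·1, and as a left K^+-module it is isomorphic to the projective module (K^+ ⊕ K^+)·(I_1 ⊕ P_n), i.e. to the image of the projection diag(1, P_n) ∈ M_2(K^+) acting on (K^+)². -/

import Mathlib

open scoped ENNReal

noncomputable section

/-- The Hilbert space ℓ²(ℤ≥0). -/
abbrev H2 : Type := lp (fun _ : ℕ => ℂ) 2

/-- The standard orthonormal basis vectors of ℓ²(ℤ≥0). -/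
noncomputable def e (i : ℕ) : H2 := lp.single 2 i 1

/-! With `u = S ^ n` and `v = (S ^ n)⋆` we have `u * v = 1` and `1 - v * u = P_n`, a finite-rank
projection. Right multiplication `b ↦ (b * v, b * P_n)` is automatically left `K⁺`-linear, and it
is inverted by `(x, y) ↦ x * u + y * P_n` because `v * u + P_n = 1`, `u * P_n = 0`, `P_n * v = 0`
and `P_n * P_n = P_n`. Both maps respect "compact plus a multiple of a fixed operator" since the
compacts form a two-sided ideal containing `P_n`; that set is closed, being the sum of a closed
subspace and a line. -/

section RightInverse

variable {R : Type*} [Ring R] {u v : R}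

theorem mul_one_sub_mul_eq_zero (h : u * v = 1) : u * (1 - v * u) = 0 := by
  rw [mul_sub, mul_one, ← mul_assoc, h, one_mul, sub_self]

theorem one_sub_mul_mul_eq_zero (h : u * v = 1) : (1 - v * u) * v = 0 := by
  rw [sub_mul, one_mul, mul_assoc, h, mul_one, sub_self]

theorem isIdempotentElem_one_sub_mul (h : u * v = 1) : IsIdempotentElem (1 - v * u) := by
  rw [IsIdempotentElem, mul_sub, mul_one, ← mul_assoc, one_sub_mul_mul_eq_zero h, zero_mul,
    sub_zero]

theorem mul_mul_add_mul_one_sub (x : R) : x * v * u + x * (1 - v * u) = x := by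
  rw [mul_sub, mul_one, mul_assoc, add_sub_cancel]

end RightInverse

section CompactAddSpan

variable {𝕜 E F : Type*} [NontriviallyNormedField 𝕜]
  [NormedAddCommGroup E] [NormedSpace 𝕜 E] [NormedAddCommGroup F] [NormedSpace 𝕜 F]

/-- `K + 𝕜 • V`, with `K` the compact operators; so `K⁺ = compactAddSpan 1`. -/
def compactAddSpan (V : E →L[𝕜] F) : Set (E →L[𝕜] F) :=
  {x | ∃ c : 𝕜, IsCompactOperator ⇑(x - c • V)}

theorem compactAddSpan_eq_sup (V : E →L[𝕜] F) :
    compactAddSpan V = ↑(compactOperator (RingHom.id 𝕜) E F ⊔ 𝕜 ∙ V) := by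
  ext x
  simp only [compactAddSpan, Set.mem_ofPred_eq, SetLike.mem_coe, Submodule.mem_sup,
    Submodule.mem_span_singleton]
  constructor
  · rintro ⟨c, hc⟩
    exact ⟨x - c • V, hc, c • V, ⟨c, rfl⟩, sub_add_cancel x _⟩
  · rintro ⟨k, hk, _, ⟨c, rfl⟩, rfl⟩
    exact ⟨c, by rwa [add_sub_cancel_right]⟩

theorem isClosed_compactAddSpan [CompleteSpace 𝕜] [CompleteSpace F] (V : E →L[𝕜] F) :
    IsClosed (compactAddSpan V) := by
  rw [compactAddSpan_eq_sup]
  exact Submodule.isClosed_sup_finiteDimensional _ _ isClosed_setOfPred_isCompactOperator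

theorem isCompactOperator_mem_compactAddSpan {k : E →L[𝕜] F} (hk : IsCompactOperator k)
    (V : E →L[𝕜] F) : k ∈ compactAddSpan V :=
  ⟨0, by rwa [zero_smul, sub_zero]⟩

theorem add_mem_compactAddSpan {x k V : E →L[𝕜] F} (hx : x ∈ compactAddSpan V)
    (hk : IsCompactOperator k) : x + k ∈ compactAddSpan V := by
  obtain ⟨c, hc⟩ := hx
  refine ⟨c, ?_⟩
  rw [add_sub_right_comm]
  exact hc.add hk

theorem mul_mem_compactAddSpan_mul {x V : E →L[𝕜] E} (hx : x ∈ compactAddSpan V) (W : E →L[𝕜] E) :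
    x * W ∈ compactAddSpan (V * W) := by
  obtain ⟨c, hc⟩ := hx
  exact ⟨c, by rw [← smul_mul_assoc, ← sub_mul]; exact hc.comp_clm W⟩

theorem mul_mem_compactAddSpan {a x V : E →L[𝕜] E} (ha : a ∈ compactAddSpan 1)
    (hx : x ∈ compactAddSpan V) : a * x ∈ compactAddSpan V := by
  obtain ⟨c, hc⟩ := ha
  obtain ⟨d, hd⟩ := hx
  refine ⟨c * d, ?_⟩
  have : a * x - (c * d) • V = (a - c • 1) * x + c • (x - d • V) := by
    rw [sub_mul, smul_mul_assoc, one_mul, smul_sub, smul_smul]; abel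
  rw [this]
  exact (hc.comp_clm x).add (hd.smul c)

theorem bijOn_mul_prod_mul {u v : E →L[𝕜] E} (h : u * v = 1)
    (hp : IsCompactOperator ⇑(1 - v * u)) :
    Set.BijOn (fun b => (b * v, b * (1 - v * u))) (compactAddSpan u)
      {z | z.1 ∈ compactAddSpan 1 ∧ ∃ y ∈ compactAddSpan 1, z.2 = y * (1 - v * u)} := by
  refine ⟨fun b hb => ⟨?_, b * (1 - v * u), ?_, ?_⟩, fun b _ b' _ hbb' => ?_, fun z hz => ?_⟩
  · simpa only [h] using mul_mem_compactAddSpan_mul hb v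
  · exact isCompactOperator_mem_compactAddSpan (hp.clm_comp b) 1
  · rw [mul_assoc, (isIdempotentElem_one_sub_mul h).eq]
  · obtain ⟨h1, h2⟩ : b * v = b' * v ∧ b * (1 - v * u) = b' * (1 - v * u) := Prod.ext_iff.mp hbb'
    calc b = b * v * u + b * (1 - v * u) := (mul_mul_add_mul_one_sub b).symm
      _ = b' * v * u + b' * (1 - v * u) := by rw [h1, h2]
      _ = b' := mul_mul_add_mul_one_sub b'
  · obtain ⟨hx, y, -, hy⟩ := hz
    refine ⟨z.1 * u + y * (1 - v * u), ?_, ?_⟩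
    · exact add_mem_compactAddSpan (by simpa only [one_mul] using mul_mem_compactAddSpan_mul hx u)
        (hp.clm_comp y)
    · refine Prod.ext ?_ ?_
      · simp only [add_mul, mul_assoc, h, one_sub_mul_mul_eq_zero h, mul_one, mul_zero, add_zero]
      · simp only [add_mul, mul_assoc, mul_one_sub_mul_eq_zero h,
          (isIdempotentElem_one_sub_mul h).eq, mul_zero, zero_add, hy]

end CompactAddSpan

theorem isCompactOperator_rankOne {𝕜 E F : Type*} [RCLike 𝕜] [NormedAddCommGroup E]
    [InnerProductSpace 𝕜 E] [NormedAddCommGroup F] [NormedSpace 𝕜 F] (x : F) (y : E) :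
    IsCompactOperator (InnerProductSpace.rankOne 𝕜 x y) :=
  (isCompactOperator_of_locallyCompactSpace_dom (innerSL 𝕜 y)).clm_comp
    (ContinuousLinearMap.toSpanSingleton 𝕜 x)

theorem e_apply (i j : ℕ) : (e i : ℕ → ℂ) j = if j = i then 1 else 0 := by
  simp [e, lp.single_apply, Pi.single_apply]

theorem inner_e_left (i : ℕ) (f : H2) : inner ℂ (e i) f = f i := by
  simp [e, lp.inner_single_left]

theorem ext_e {T T' : H2 →L[ℂ] H2} (h : ∀ i, T (e i) = T' (e i)) : T = T' :=
  lp.ext_continuousLinearMap (by norm_num) fun i => ContinuousLinearMap.ext_ring (h i)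

theorem eq_sum_rankOne_e {n : ℕ} {P : H2 →L[ℂ] H2}
    (hP : ∀ i, (i < n → P (e i) = e i) ∧ (n ≤ i → P (e i) = 0)) :
    P = ∑ i ∈ Finset.range n, InnerProductSpace.rankOne ℂ (e i) (e i) := by
  refine ext_e fun j => ?_
  simp only [sum_apply, InnerProductSpace.rankOne_apply, inner_e_left,
    e_apply, ite_smul, one_smul, zero_smul, Finset.sum_ite_eq', Finset.mem_range]
  rcases lt_or_ge j n with hj | hj
  · rw [if_pos hj, (hP j).1 hj]
  · rw [if_neg hj.not_gt, (hP j).2 hj]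

theorem isCompactOperator_of_apply_e {n : ℕ} {P : H2 →L[ℂ] H2}
    (hP : ∀ i, (i < n → P (e i) = e i) ∧ (n ≤ i → P (e i) = 0)) : IsCompactOperator P := by
  rw [eq_sum_rankOne_e hP]
  exact Submodule.sum_mem (compactOperator (RingHom.id ℂ) H2 H2) fun i _ =>
    isCompactOperator_rankOne (e i) (e i)

section BackwardShift

variable {S : H2 →L[ℂ] H2} (hS0 : S (e 0) = 0) (hS : ∀ p, 1 ≤ p → S (e p) = e (p - 1))
include hS0 hS

theorem pow_apply_e (m i : ℕ) : (S ^ m) (e i) = if m ≤ i then e (i - m) else 0 := by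
  induction m generalizing i with
  | zero => simp
  | succ m ih =>
    rw [pow_succ, mul_apply_eq_comp]
    rcases Nat.eq_zero_or_pos i with rfl | hi
    · simp [hS0]
    · rw [hS i hi, ih]
      by_cases hm : m + 1 ≤ i
      · rw [if_pos (by omega), if_pos hm, Nat.sub_sub, Nat.add_comm 1 m]
      · rw [if_neg (by omega), if_neg hm]

theorem star_pow_apply_e (m i : ℕ) : star (S ^ m) (e i) = e (i + m) := by
  ext j
  rw [← inner_e_left, ContinuousLinearMap.star_eq_adjoint,
    ContinuousLinearMap.adjoint_inner_right, pow_apply_e hS0 hS, e_apply]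
  split_ifs with hmj hj hj
  · rw [inner_e_left, e_apply, if_pos (by omega)]
  · rw [inner_e_left, e_apply, if_neg (by omega)]
  · omega
  · rw [inner_zero_left]

theorem pow_mul_star_pow (m : ℕ) : S ^ m * star (S ^ m) = 1 :=
  ext_e fun i => by
    rw [mul_apply_eq_comp, star_pow_apply_e hS0 hS, pow_apply_e hS0 hS,
      if_pos (Nat.le_add_left m i), Nat.add_sub_cancel, one_apply_eq_self]

theorem star_pow_mul_pow {n : ℕ} {P : H2 →L[ℂ] H2}
    (hP : ∀ i, (i < n → P (e i) = e i) ∧ (n ≤ i → P (e i) = 0)) :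
    star (S ^ n) * S ^ n = 1 - P :=
  ext_e fun i => by
    rw [mul_apply_eq_comp, pow_apply_e hS0 hS, sub_apply, one_apply_eq_self]
    rcases lt_or_ge i n with hi | hi
    · rw [if_neg hi.not_ge, map_zero, (hP i).1 hi, sub_self]
    · rw [if_pos hi, star_pow_apply_e hS0 hS, Nat.sub_add_cancel hi, (hP i).2 hi, sub_zero]

end BackwardShift

/-- For `n ≥ 0`, the space `B = K + ℂ·S^n ⊆ B(ℓ²(ℤ≥0))` is closed, invariant under left
multiplication by `K⁺ = K + ℂ·1`, and as a left `K⁺`-module it is isomorphic to the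
projective module `(K⁺ ⊕ K⁺)·(I₁ ⊕ P_n)`, realized concretely as
`{(x, y·P_n) : x, y ∈ K⁺}`. -/
theorem stmt12 (n : ℕ) (S Pn : H2 →L[ℂ] H2)
    (hS0 : S (e 0) = 0) (hS : ∀ p, 1 ≤ p → S (e p) = e (p - 1))
    (hPn : ∀ i, (i < n → Pn (e i) = e i) ∧ (n ≤ i → Pn (e i) = 0)) :
    let Kplus : Set (H2 →L[ℂ] H2) := {x | ∃ c : ℂ, IsCompactOperator ⇑(x - c • 1)}
    let Bset : Set (H2 →L[ℂ] H2) := {x | ∃ c : ℂ, IsCompactOperator ⇑(x - c • S ^ n)}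
    let Mset : Set ((H2 →L[ℂ] H2) × (H2 →L[ℂ] H2)) :=
      {z | z.1 ∈ Kplus ∧ ∃ y ∈ Kplus, z.2 = y * Pn}
    IsClosed Bset ∧
    (∀ a ∈ Kplus, ∀ b ∈ Bset, a * b ∈ Bset) ∧
    ∃ φ : (H2 →L[ℂ] H2) →ₗ[ℂ] ((H2 →L[ℂ] H2) × (H2 →L[ℂ] H2)),
      Set.BijOn φ Bset Mset ∧
      ∀ a ∈ Kplus, ∀ b ∈ Bset, φ (a * b) = (a * (φ b).1, a * (φ b).2) := by
  have hPc : IsCompactOperator Pn := isCompactOperator_of_apply_e hPn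
  obtain rfl : Pn = 1 - star (S ^ n) * S ^ n := by
    rw [star_pow_mul_pow hS0 hS hPn, sub_sub_cancel]
  exact ⟨isClosed_compactAddSpan _, fun a ha b hb => mul_mem_compactAddSpan ha hb,
    (LinearMap.mulRight ℂ (star (S ^ n))).prod (LinearMap.mulRight ℂ (1 - star (S ^ n) * S ^ n)),
    bijOn_mul_prod_mul (pow_mul_star_pow hS0 hS n) hPc,
    fun a _ b _ => Prod.ext (mul_assoc a b _) (mul_assoc a b _)⟩
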